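/- arXiv:2010.03368 — 2 statements merged into one kernel-verified Lean document; each statement's English description precedes it below -/
import Mathlib

section
/- Let W : ℝ³ → ℝ be twice continuously differentiable, let r, θ be twice continuously differentiable on [0, L₀], and let h_r : [0, L₀] → ℝ², h_θ : [0, L₀] → ℝ be continuously differentiable with h_r(0) = h_r(L₀) = 0 and h_θ(0) = h_θ(L₀) = 0. Define the stresses n₁(s) = ∂W/∂ν₁(w(s)), n₂(s) = ∂W/∂ν₂(w(s)), m(s) = ∂W/∂κ(w(s)), where w(s) = (ν₁(s), ν₂(s), κ(s)) are the strains of (r, θ). Then the potential energy 𝒱(ε) = ∫₀^{L₀} W(ν₁^ε(s), ν₂^ε(s), κ^ε(s)) ds of the perturbed configuration (r + ε h_r, θ + ε h_θ) is differentiable at ε = 0 with 𝒱′(0) = −∫₀^{L₀} [ ⟨ d/ds ( n₁(s)𝖺(s) + n₂(s)𝖻(s) ), h_r(s) ⟩ + ( m′(s) + ν₁(s) n₂(s) − ν₂(s) n₁(s) ) h_θ(s) ] ds. In other words, the negative variational gradient of the elastic potential energy is the internal force ∂ₛ(n₁𝖺 + n₂𝖻) together with the internal couple ∂ₛm + ν₁n₂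 − ν₂n₁. -/
/-!
The perturbed energy density depends on `ε` only through the jet `(r′ + ε h_r′, θ + ε h_θ,
θ′ + ε h_θ′)`, on which it is the fixed `C¹` function `W ∘ strains`. Differentiating under the
integral sign and applying the chain rule gives the virtual work
`∫ n₁ δν₁ + n₂ δν₂ + m δκ`, where `δν₁ = ⟨h_r′, 𝖺⟩ + h_θ ν₂`, `δν₂ = ⟨h_r′, 𝖻⟩ − h_θ ν₁` and
`δκ = h_θ′` (rotating the frame by `h_θ` turns `𝖺` into `𝖻` and `𝖻` into `−𝖺`). Integrating by
parts moves the derivatives off `h_r` and `h_θ`; the boundary term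
`⟨n₁𝖺 + n₂𝖻, h_r⟩ + m h_θ` vanishes at both ends.
-/

noncomputable def dot (u v : ℝ × ℝ) : ℝ := u.1 * v.1 + u.2 * v.2

open Real Set intervalIntegral

theorem hasDerivAt_integral_comp_add_smul {E F : Type*} [NormedAddCommGroup E]
    [NormedSpace ℝ E] [NormedAddCommGroup F] [NormedSpace ℝ F] [CompleteSpace F] {G : E → F}
    (hG : ContDiff ℝ 1 G) {x v : ℝ → E} (hx : Continuous x) (hv : Continuous v) (a b : ℝ) :
    HasDerivAt (fun ε : ℝ => ∫ s in a..b, G (x s + ε • v s))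
      (∫ s in a..b, fderiv ℝ G (x s) (v s)) 0 := by
  set G' : ℝ × ℝ → F := fun p => fderiv ℝ G (x p.2 + p.1 • v p.2) (v p.2)
  have hG' : Continuous G' :=
    ((hG.continuous_fderiv one_ne_zero).comp (by fun_prop)).clm_apply (hv.comp continuous_snd)
  have hGε : ∀ ε : ℝ, Continuous fun s => G (x s + ε • v s) := fun ε =>
    hG.continuous.comp (by fun_prop)
  have hderiv : ∀ ε s, HasDerivAt (fun e : ℝ => G (x s + e • v s)) (G' (ε, s)) ε := fun ε s =>
    (hG.differentiable one_ne_zero _).hasFDerivAt.comp_hasDerivAt ε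
      (by simpa using ((hasDerivAt_id ε).smul_const (v s)).const_add (x s))
  obtain ⟨C, hC⟩ := ((isCompact_closedBall (0 : ℝ) 1).prod (isCompact_uIcc (a := a) (b := b)))
    |>.exists_bound_of_continuousOn hG'.continuousOn
  simpa [G'] using (hasDerivAt_integral_of_dominated_loc_of_deriv_le
    (F' := fun ε s => G' (ε, s)) (bound := fun _ => C) (Metric.closedBall_mem_nhds 0 one_pos)
    (.of_forall fun ε => (hGε ε).aestronglyMeasurable) ((hGε 0).intervalIntegrable _ _)
    (hG'.comp (Continuous.prodMk_right 0)).aestronglyMeasurable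
    (.of_forall fun s hs ε hε => hC (ε, s) ⟨hε, uIoc_subset_uIcc hs⟩) intervalIntegrable_const
    (.of_forall fun s _ ε _ => hderiv ε s)).2

theorem fderiv_apply_eq_sum_partialDeriv {F : Type*} [NormedAddCommGroup F] [NormedSpace ℝ F]
    {W : ℝ × ℝ × ℝ → F} {p : ℝ × ℝ × ℝ} (hW : DifferentiableAt ℝ W p) (u : ℝ × ℝ × ℝ) :
    fderiv ℝ W p u = u.1 • deriv (fun x => W (x, p.2.1, p.2.2)) p.1
      + u.2.1 • deriv (fun y => W (p.1, y, p.2.2)) p.2.1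
      + u.2.2 • deriv (fun z => W (p.1, p.2.1, z)) p.2.2 := by
  have h₁ : deriv (fun x => W (x, p.2.1, p.2.2)) p.1 = fderiv ℝ W p (1, 0, 0) :=
    (hW.hasFDerivAt.comp_hasDerivAt_of_eq _
      ((hasDerivAt_id _).prodMk (hasDerivAt_const _ _)) rfl).deriv
  have h₂ : deriv (fun y => W (p.1, y, p.2.2)) p.2.1 = fderiv ℝ W p (0, 1, 0) :=
    (hW.hasFDerivAt.comp_hasDerivAt_of_eq _ ((hasDerivAt_const _ _).prodMk
      ((hasDerivAt_id _).prodMk (hasDerivAt_const _ _))) rfl).deriv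
  have h₃ : deriv (fun z => W (p.1, p.2.1, z)) p.2.2 = fderiv ℝ W p (0, 0, 1) :=
    (hW.hasFDerivAt.comp_hasDerivAt_of_eq _ ((hasDerivAt_const _ _).prodMk
      ((hasDerivAt_const _ _).prodMk (hasDerivAt_id _))) rfl).deriv
  rw [h₁, h₂, h₃, ← map_smul, ← map_smul, ← map_smul, ← map_add, ← map_add]
  congr 1
  ext <;> simp

/-- The strains `(ν₁, ν₂, κ)` at a point, as a function of the jet `(r′, θ, θ′)` there. -/
noncomputable def strains (p : (ℝ × ℝ) × ℝ × ℝ) : ℝ × ℝ × ℝ :=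
  (dot p.1 (cos p.2.1, sin p.2.1), dot p.1 (-sin p.2.1, cos p.2.1), p.2.2)

theorem contDiff_strains {n : WithTop ℕ∞} : ContDiff ℝ n strains := by
  unfold strains dot; fun_prop

theorem fderiv_strains_apply (p q : (ℝ × ℝ) × ℝ × ℝ) :
    fderiv ℝ strains p q =
      (dot q.1 (cos p.2.1, sin p.2.1) + q.2.1 * (strains p).2.1,
        dot q.1 (-sin p.2.1, cos p.2.1) - q.2.1 * (strains p).1, q.2.2) := by
  have hline : HasDerivAt (fun ε : ℝ => p + ε • q) q 0 := by
    simpa using ((hasDerivAt_id (0 : ℝ)).smul_const q).const_add p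
  have hφ := (hasDerivAt_mul_const (x := (0 : ℝ)) q.2.1).const_add p.2.1
  have hu₁ := (hasDerivAt_mul_const (x := (0 : ℝ)) q.1.1).const_add p.1.1
  have hu₂ := (hasDerivAt_mul_const (x := (0 : ℝ)) q.1.2).const_add p.1.2
  have hκ := (hasDerivAt_mul_const (x := (0 : ℝ)) q.2.2).const_add p.2.2
  have hcomp := ((hu₁.mul hφ.cos).add (hu₂.mul hφ.sin)).prodMk
    (((hu₁.mul hφ.sin).neg.add (hu₂.mul hφ.cos)).prodMk hκ)
  have hstrains : HasDerivAt (fun ε : ℝ => strains (p + ε • q))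
      (dot q.1 (cos p.2.1, sin p.2.1) + q.2.1 * (strains p).2.1,
        dot q.1 (-sin p.2.1, cos p.2.1) - q.2.1 * (strains p).1, q.2.2) 0 := by
    refine (hcomp.congr_deriv ?_).congr_of_eventuallyEq (.of_forall fun ε => ?_)
    · ext <;> simp [strains, dot] <;> ring
    · ext <;> simp [strains, dot]
  exact ((contDiff_strains (n := 1)).differentiable one_ne_zero p).hasFDerivAt
    |>.comp_hasDerivAt_of_eq 0 hline (by simp) |>.unique hstrains

@[simp]
theorem dot_zero_right (u : ℝ × ℝ) : dot u 0 = 0 := by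
  simp [dot]

theorem HasDerivAt.dot {f g : ℝ → ℝ × ℝ} {f' g' : ℝ × ℝ} {t : ℝ} (hf : HasDerivAt f f' t)
    (hg : HasDerivAt g g' t) :
    HasDerivAt (fun s => _root_.dot (f s) (g s)) (_root_.dot f' (g t) + _root_.dot (f t) g') t := by
  have hfst : ∀ {u : ℝ → ℝ × ℝ} {u'}, HasDerivAt u u' t → HasDerivAt (fun s => (u s).1) u'.1 t :=
    fun hu => (ContinuousLinearMap.fst ℝ ℝ ℝ).hasFDerivAt.comp_hasDerivAt t hu
  have hsnd : ∀ {u : ℝ → ℝ × ℝ} {u'}, HasDerivAt u u' t → HasDerivAt (fun s => (u s).2) u'.2 t :=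
    fun hu => (ContinuousLinearMap.snd ℝ ℝ ℝ).hasFDerivAt.comp_hasDerivAt t hu
  refine (((hfst hf).mul (hfst hg)).add ((hsnd hf).mul (hsnd hg))).congr_deriv ?_
  simp only [_root_.dot]; ring

theorem integral_virtualWork_eq_neg_integral_balance {θ n₁ n₂ m ν₁ ν₂ h_θ : ℝ → ℝ}
    {h_r : ℝ → ℝ × ℝ} {s₀ s₁ : ℝ} (hθ : ContDiff ℝ 1 θ) (hn₁ : ContDiff ℝ 1 n₁)
    (hn₂ : ContDiff ℝ 1 n₂) (hm : ContDiff ℝ 1 m) (hν₁ : Continuous ν₁) (hν₂ : Continuous ν₂)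
    (hhr : ContDiff ℝ 1 h_r) (hhθ : ContDiff ℝ 1 h_θ) (hr₀ : h_r s₀ = 0) (hr₁ : h_r s₁ = 0)
    (hθ₀ : h_θ s₀ = 0) (hθ₁ : h_θ s₁ = 0) :
    ∫ s in s₀..s₁, ((dot (deriv h_r s) (cos (θ s), sin (θ s)) + h_θ s * ν₂ s) * n₁ s
        + (dot (deriv h_r s) (-sin (θ s), cos (θ s)) - h_θ s * ν₁ s) * n₂ s
        + deriv h_θ s * m s)
      = -∫ s in s₀..s₁,
        (dot (deriv (fun t => n₁ t • (cos (θ t), sin (θ t)) + n₂ t • (-sin (θ t), cos (θ t))) s)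
            (h_r s)
          + (deriv m s + ν₁ s * n₂ s - ν₂ s * n₁ s) * h_θ s) := by
  set P := fun t => n₁ t • (cos (θ t), sin (θ t)) + n₂ t • (-sin (θ t), cos (θ t))
  have hP : ContDiff ℝ 1 P := by simp only [P]; fun_prop
  have hdiff : ∀ {f : ℝ → ℝ × ℝ}, ContDiff ℝ 1 f → ∀ s, HasDerivAt f (deriv f s) s :=
    fun hf s => (hf.differentiable one_ne_zero s).hasDerivAt
  have hboundary : ∀ s, HasDerivAt (fun s => dot (P s) (h_r s) + m s * h_θ s)
      (((dot (deriv h_r s) (cos (θ s), sin (θ s)) + h_θ s * ν₂ s) * n₁ s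
        + (dot (deriv h_r s) (-sin (θ s), cos (θ s)) - h_θ s * ν₁ s) * n₂ s
        + deriv h_θ s * m s)
      + (dot (deriv P s) (h_r s) + (deriv m s + ν₁ s * n₂ s - ν₂ s * n₁ s) * h_θ s)) s := by
    intro s
    refine (((hdiff hP s).dot (hdiff hhr s)).add
      ((hm.differentiable one_ne_zero s).hasDerivAt.mul
        (hhθ.differentiable one_ne_zero s).hasDerivAt)).congr_deriv ?_
    simp only [P, dot, Prod.smul_mk, Prod.mk_add_mk, smul_eq_mul]; ring
  have hvirtual : Continuous fun s =>
      (dot (deriv h_r s) (cos (θ s), sin (θ s)) + h_θ s * ν₂ s) * n₁ s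
        + (dot (deriv h_r s) (-sin (θ s), cos (θ s)) - h_θ s * ν₁ s) * n₂ s
        + deriv h_θ s * m s := by
    have := hhr.continuous_deriv le_rfl
    have := hhθ.continuous_deriv le_rfl
    unfold dot; fun_prop
  have hbalance : Continuous fun s =>
      dot (deriv P s) (h_r s) + (deriv m s + ν₁ s * n₂ s - ν₂ s * n₁ s) * h_θ s := by
    have := hP.continuous_deriv le_rfl
    have := hm.continuous_deriv le_rfl
    unfold dot; fun_prop
  have hftc := integral_eq_sub_of_hasDerivAt (fun s _ => hboundary s)
    ((hvirtual.add hbalance).intervalIntegrable s₀ s₁)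
  rw [integral_add (hvirtual.intervalIntegrable _ _) (hbalance.intervalIntegrable _ _)] at hftc
  simp only [hr₀, hr₁, hθ₀, hθ₁, dot_zero_right, mul_zero, add_zero, sub_zero] at hftc
  linarith

theorem elastic_energy_first_variation_general
    (L₀ : ℝ)
    (W : ℝ × ℝ × ℝ → ℝ) (hW : ContDiff ℝ 2 W)
    (r : ℝ → ℝ × ℝ) (θ : ℝ → ℝ) (hr : ContDiff ℝ 2 r) (hθ : ContDiff ℝ 2 θ)
    (h_r : ℝ → ℝ × ℝ) (h_θ : ℝ → ℝ) (hhr : ContDiff ℝ 1 h_r) (hhθ : ContDiff ℝ 1 h_θ)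
    (hr0 : h_r 0 = 0) (hrL : h_r L₀ = 0) (hθ0 : h_θ 0 = 0) (hθL : h_θ L₀ = 0)
    (a b : ℝ → ℝ × ℝ)
    (ha : ∀ s, a s = (Real.cos (θ s), Real.sin (θ s)))
    (hb : ∀ s, b s = (-Real.sin (θ s), Real.cos (θ s)))
    (ν₁ ν₂ κ : ℝ → ℝ)
    (hν₁ : ∀ s, ν₁ s = dot (deriv r s) (a s))
    (hν₂ : ∀ s, ν₂ s = dot (deriv r s) (b s))
    (hκ : ∀ s, κ s = deriv θ s)
    (n₁ n₂ m : ℝ → ℝ)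
    (hn₁ : ∀ s, n₁ s = deriv (fun x => W (x, ν₂ s, κ s)) (ν₁ s))
    (hn₂ : ∀ s, n₂ s = deriv (fun y => W (ν₁ s, y, κ s)) (ν₂ s))
    (hm : ∀ s, m s = deriv (fun z => W (ν₁ s, ν₂ s, z)) (κ s))
    (aε bε : ℝ → ℝ → ℝ × ℝ)
    (haε : ∀ ε s, aε ε s = (Real.cos (θ s + ε * h_θ s), Real.sin (θ s + ε * h_θ s)))
    (hbε : ∀ ε s, bε ε s = (-Real.sin (θ s + ε * h_θ s), Real.cos (θ s + ε * h_θ s)))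
    (ν₁ε ν₂ε κε : ℝ → ℝ → ℝ)
    (hν₁ε : ∀ ε s, ν₁ε ε s = dot (deriv r s + ε • deriv h_r s) (aε ε s))
    (hν₂ε : ∀ ε s, ν₂ε ε s = dot (deriv r s + ε • deriv h_r s) (bε ε s))
    (hκε : ∀ ε s, κε ε s = deriv θ s + ε * deriv h_θ s)
    (𝒱 : ℝ → ℝ)
    (h𝒱 : ∀ ε, 𝒱 ε = ∫ s in (0:ℝ)..L₀, W (ν₁ε ε s, ν₂ε ε s, κε ε s)) :
    HasDerivAt 𝒱
      (-∫ s in (0:ℝ)..L₀,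
        (dot (deriv (fun t => n₁ t • a t + n₂ t • b t) s) (h_r s)
          + (deriv m s + ν₁ s * n₂ s - ν₂ s * n₁ s) * h_θ s)) 0 := by
  obtain rfl : a = _ := funext ha
  obtain rfl : b = _ := funext hb
  set x : ℝ → (ℝ × ℝ) × ℝ × ℝ := fun s => (deriv r s, θ s, deriv θ s)
  set v : ℝ → (ℝ × ℝ) × ℝ × ℝ := fun s => (deriv h_r s, h_θ s, deriv h_θ s)
  have hθ₁ : ContDiff ℝ 1 θ := hθ.of_le one_le_two
  have hx : ContDiff ℝ 1 x := (hr.deriv' (n := 1)).prodMk (hθ₁.prodMk (hθ.deriv' (n := 1)))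
  have hv : Continuous v := (hhr.continuous_deriv le_rfl).prodMk
    (hhθ.continuous.prodMk (hhθ.continuous_deriv le_rfl))
  have h𝒱_eq : 𝒱 = fun ε => ∫ s in (0:ℝ)..L₀, (W ∘ strains) (x s + ε • v s) := by
    funext ε
    simp [h𝒱, strains, hν₁ε, hν₂ε, haε, hbε, hκε, x, v]
  have hw : ∀ s, strains (x s) = (ν₁ s, ν₂ s, κ s) := fun s => by
    simp [strains, x, hν₁, hν₂, hκ]
  have hwC : ContDiff ℝ 1 fun s => (ν₁ s, ν₂ s, κ s) := by
    convert contDiff_strains.comp hx using 1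
    exact funext fun s => (hw s).symm
  have hWd : Differentiable ℝ W := hW.differentiable two_ne_zero
  have hstress : ∀ s u,
      fderiv ℝ W (ν₁ s, ν₂ s, κ s) u = u.1 * n₁ s + u.2.1 * n₂ s + u.2.2 * m s := fun s u => by
    rw [fderiv_apply_eq_sum_partialDeriv (hWd _), hn₁, hn₂, hm]; rfl
  have hstressC : ∀ u, ContDiff ℝ 1 fun s => fderiv ℝ W (ν₁ s, ν₂ s, κ s) u := fun u =>
    ((hW.fderiv_right le_rfl).comp hwC).clm_apply contDiff_const
  have hn₁C : ContDiff ℝ 1 n₁ := by simpa [hstress] using hstressC (1, 0, 0)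
  have hn₂C : ContDiff ℝ 1 n₂ := by simpa [hstress] using hstressC (0, 1, 0)
  have hmC : ContDiff ℝ 1 m := by simpa [hstress] using hstressC (0, 0, 1)
  rw [h𝒱_eq, ← integral_virtualWork_eq_neg_integral_balance hθ₁ hn₁C hn₂C hmC
    (hwC.continuous.fst) (hwC.continuous.snd.fst) hhr hhθ hr0 hrL hθ0 hθL]
  refine (hasDerivAt_integral_comp_add_smul ((hW.comp contDiff_strains).of_le one_le_two)
    hx.continuous hv 0 L₀).congr_deriv (integral_congr fun s _ => ?_)
  rw [fderiv_comp _ (hWd _) (contDiff_strains.differentiable one_ne_zero _),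
    ContinuousLinearMap.comp_apply, fderiv_strains_apply, hw, hstress]

/-- The negative variational gradient of the hyperelastic
potential energy 𝒱 = ∫₀^{L₀} W(ν₁, ν₂, κ) ds is the internal force
∂ₛ(n₁𝖺 + n₂𝖻) together with the internal couple ∂ₛm + ν₁n₂ − ν₂n₁, for
variations (h_r, h_θ) vanishing at both endpoints. -/
theorem elastic_energy_first_variation
    (L₀ : ℝ) (hL : 0 < L₀)
    (W : ℝ × ℝ × ℝ → ℝ) (hW : ContDiff ℝ 2 W)
    (r : ℝ → ℝ × ℝ) (θ : ℝ → ℝ) (hr : ContDiff ℝ 2 r) (hθ : ContDiff ℝ 2 θ)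
    (h_r : ℝ → ℝ × ℝ) (h_θ : ℝ → ℝ) (hhr : ContDiff ℝ 1 h_r) (hhθ : ContDiff ℝ 1 h_θ)
    (hr0 : h_r 0 = 0) (hrL : h_r L₀ = 0) (hθ0 : h_θ 0 = 0) (hθL : h_θ L₀ = 0)
    (a b : ℝ → ℝ × ℝ)
    (ha : ∀ s, a s = (Real.cos (θ s), Real.sin (θ s)))
    (hb : ∀ s, b s = (-Real.sin (θ s), Real.cos (θ s)))
    (ν₁ ν₂ κ : ℝ → ℝ)
    (hν₁ : ∀ s, ν₁ s = dot (deriv r s) (a s))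
    (hν₂ : ∀ s, ν₂ s = dot (deriv r s) (b s))
    (hκ : ∀ s, κ s = deriv θ s)
    (n₁ n₂ m : ℝ → ℝ)
    (hn₁ : ∀ s, n₁ s = deriv (fun x => W (x, ν₂ s, κ s)) (ν₁ s))
    (hn₂ : ∀ s, n₂ s = deriv (fun y => W (ν₁ s, y, κ s)) (ν₂ s))
    (hm : ∀ s, m s = deriv (fun z => W (ν₁ s, ν₂ s, z)) (κ s))
    (aε bε : ℝ → ℝ → ℝ × ℝ)
    (haε : ∀ ε s, aε ε s = (Real.cos (θ s + ε * h_θ s), Real.sin (θ s + ε * h_θ s)))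
    (hbε : ∀ ε s, bε ε s = (-Real.sin (θ s + ε * h_θ s), Real.cos (θ s + ε * h_θ s)))
    (ν₁ε ν₂ε κε : ℝ → ℝ → ℝ)
    (hν₁ε : ∀ ε s, ν₁ε ε s = dot (deriv r s + ε • deriv h_r s) (aε ε s))
    (hν₂ε : ∀ ε s, ν₂ε ε s = dot (deriv r s + ε • deriv h_r s) (bε ε s))
    (hκε : ∀ ε s, κε ε s = deriv θ s + ε * deriv h_θ s)
    (𝒱 : ℝ → ℝ)
    (h𝒱 : ∀ ε, 𝒱 ε = ∫ s in (0:ℝ)..L₀, W (ν₁ε ε s, ν₂ε ε s, κε ε s)) :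
    HasDerivAt 𝒱
      (-∫ s in (0:ℝ)..L₀,
        (dot (deriv (fun t => n₁ t • a t + n₂ t • b t) s) (h_r s)
          + (deriv m s + ν₁ s * n₂ s - ν₂ s * n₁ s) * h_θ s)) 0 :=
  elastic_energy_first_variation_general L₀ W hW r θ hr hθ h_r h_θ hhr hhθ hr0 hrL hθ0 hθL a b ha hb
    ν₁ ν₂ κ hν₁ hν₂ hκ n₁ n₂ m hn₁ hn₂ hm aε bε haε hbε ν₁ε ν₂ε κε hν₁ε hν₂ε hκε 𝒱 h𝒱
end

section
/- Let F be a finite-dimensional real inner product space, let M⁻¹ : F →L F be symmetric (⟨M⁻¹x, y⟩ = ⟨x, M⁻¹y⟩) and positive definite (⟨M⁻¹x, x⟩ > 0 for x ≠ 0), let V : F → ℝ be continuously differentiable, and let γ ≥ 0. Suppose q_α ∈ F is a strict local minimizer of V: there exists r₀ > 0 such that V(q) > V(q_α) whenever 0 < ‖q − q_α‖ ≤ r₀. Then the equilibrium (q_α, 0) is Lyapunov stable: for every ε > 0 there exists δ > 0 such that every pair of differentiable curves q, p : [0, ∞) → F satisfying q′(t) = M⁻¹p(t), p′(t) = −∇V(q(t))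 − γ M⁻¹p(t) for all t ≥ 0 and ‖q(0) − q_α‖ + ‖p(0)‖ < δ satisfies ‖q(t) − q_α‖ + ‖p(t)‖ < ε for all t ≥ 0. -/
/-!
Along a solution the energy `H(q, p) = ⟪M⁻¹p, p⟫ / 2 + V q` has derivative `-γ ‖M⁻¹p‖²`, so it
never increases, and positive definiteness of `M⁻¹` makes `(qα, 0)` a strict local minimum of `H`.
This is Lyapunov's direct method: measure the distance to `(qα, 0)` by the `ℓ¹` distance
`‖q - qα‖ + ‖p‖` on `F × F`. The sphere of small radius `ε` is compact, so `H` exceeds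
`H(qα, 0)` on it by some margin; a solution starting where `H` is below that margin can never
reach the sphere, by the intermediate value theorem.
-/

open RealInnerProductSpace Set Metric

theorem lyapunov_stability_of_strict_min {X : Type*} [PseudoMetricSpace X] [ProperSpace X]
    {W : X → ℝ} (hW : Continuous W) {x₀ : X} {r : ℝ} (hr : 0 < r)
    (hmin : ∀ x, 0 < dist x x₀ → dist x x₀ ≤ r → W x₀ < W x) {ε : ℝ} (hε : 0 < ε) :
    ∃ δ > 0, ∀ z : ℝ → X, ContinuousOn z (Ici 0) → AntitoneOn (W ∘ z) (Ici 0) →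
      dist (z 0) x₀ < δ → ∀ t, 0 ≤ t → dist (z t) x₀ < ε := by
  set ε' := min ε r
  have hε' : 0 < ε' := lt_min hε hr
  obtain ⟨m, hm, hm_le⟩ := (isCompact_sphere x₀ ε').exists_forall_le' hW.continuousOn
    fun x hx => hmin x (by rwa [mem_sphere.1 hx]) (by rw [mem_sphere.1 hx]; exact min_le_right _ _)
  obtain ⟨δ, hδ, hW_lt⟩ :=
    Metric.eventually_nhds_iff.1 (hW.continuousAt.eventually (gt_mem_nhds hm))
  refine ⟨min δ ε', lt_min hδ hε', fun z hz hWz h0 t ht => ?_⟩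
  by_contra! hzt
  obtain ⟨t₁, ⟨ht₁, -⟩, hzt₁⟩ : ∃ t₁ ∈ Icc 0 t, dist (z t₁) x₀ = ε' :=
    intermediate_value_Icc ht ((continuous_id.dist continuous_const).comp_continuousOn
      (hz.mono Icc_subset_Ici_self))
      ⟨(h0.trans_le (min_le_right _ _)).le, (min_le_left _ _).trans hzt⟩
  have hW_t₁ : m ≤ W (z t₁) := hm_le _ (mem_sphere.2 hzt₁)
  have hW_0 : W (z 0) < m := hW_lt (h0.trans_le (min_le_left _ _))
  exact (hW_t₁.trans (hWz self_mem_Ici ht₁ ht₁)).not_gt hW_0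

section DampedHamiltonian

variable {F : Type*} [NormedAddCommGroup F] [InnerProductSpace ℝ F]

noncomputable def hamiltonian (Minv : F →L[ℝ] F) (V : F → ℝ) (z : F × F) : ℝ :=
  ⟪Minv z.2, z.2⟫ / 2 + V z.1

theorem HasDerivAt.half_inner_map_self {A : F →L[ℝ] F} (hA : ∀ x y, ⟪A x, y⟫ = ⟪x, A y⟫)
    {p : ℝ → F} {p' : F} {t : ℝ} (hp : HasDerivAt p p' t) :
    HasDerivAt (fun s => ⟪A (p s), p s⟫ / 2) ⟪A (p t), p'⟫ t := by
  refine (((A.hasFDerivAt.comp_hasDerivAt t hp).inner ℝ hp).div_const 2).congr_deriv ?_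
  rw [Function.comp_apply, hA, real_inner_comm]
  ring

theorem hasDerivAt_hamiltonian_of_damped {Minv : F →L[ℝ] F}
    (hsym : ∀ x y, ⟪Minv x, y⟫ = ⟪x, Minv y⟫) {V : F → ℝ} {g : F} {γ : ℝ} {q p : ℝ → F} {t : ℝ}
    (hV : HasFDerivAt V (innerSL ℝ g) (q t)) (hq : HasDerivAt q (Minv (p t)) t)
    (hp : HasDerivAt p (-g - γ • Minv (p t)) t) :
    HasDerivAt (fun s => hamiltonian Minv V (q s, p s)) (-(γ * ‖Minv (p t)‖ ^ 2)) t := by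
  have hpot : HasDerivAt (fun s => V (q s)) ⟪g, Minv (p t)⟫ t := hV.comp_hasDerivAt t hq
  refine ((hp.half_inner_map_self hsym).add hpot).congr_deriv ?_
  rw [inner_sub_right, inner_neg_right, real_inner_smul_right, real_inner_self_eq_norm_sq,
    real_inner_comm]
  ring

theorem antitoneOn_hamiltonian_of_damped {Minv : F →L[ℝ] F}
    (hsym : ∀ x y, ⟪Minv x, y⟫ = ⟪x, Minv y⟫) {V : F → ℝ} {gradV : F → F}
    (hV : ∀ x, HasFDerivAt V (innerSL ℝ (gradV x)) x) {γ : ℝ} (hγ : 0 ≤ γ) {q p : ℝ → F}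
    (hq : ∀ t, 0 ≤ t → HasDerivAt q (Minv (p t)) t)
    (hp : ∀ t, 0 ≤ t → HasDerivAt p (-gradV (q t) - γ • Minv (p t)) t) :
    AntitoneOn (fun s => hamiltonian Minv V (q s, p s)) (Ici 0) := by
  have hE (t : ℝ) (ht : t ∈ Ici 0) :=
    hasDerivAt_hamiltonian_of_damped hsym (hV (q t)) (hq t ht) (hp t ht)
  refine antitoneOn_of_hasDerivWithinAt_nonpos (convex_Ici 0)
    (fun t ht => (hE t ht).continuousAt.continuousWithinAt)
    (fun t ht => (hE t (interior_subset ht)).hasDerivWithinAt) fun t _ => ?_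
  exact neg_nonpos.2 (mul_nonneg hγ (sq_nonneg _))

theorem continuous_hamiltonian (Minv : F →L[ℝ] F) {V : F → ℝ} (hV : Continuous V) :
    Continuous (hamiltonian Minv V) := by
  unfold hamiltonian; fun_prop

theorem hamiltonian_lt_of_strictMin {Minv : F →L[ℝ] F} (hpd : ∀ x, x ≠ 0 → 0 < ⟪Minv x, x⟫)
    {V : F → ℝ} {qα : F} {r : ℝ}
    (hmin : ∀ x, 0 < ‖x - qα‖ → ‖x - qα‖ ≤ r → V qα < V x) {q p : F}
    (hpos : 0 < ‖q - qα‖ + ‖p‖) (hr : ‖q - qα‖ + ‖p‖ ≤ r) :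
    hamiltonian Minv V (qα, 0) < hamiltonian Minv V (q, p) := by
  simp only [hamiltonian, map_zero, inner_zero_left, zero_div, zero_add]
  rcases eq_or_ne p 0 with rfl | hp
  · simp only [norm_zero, add_zero] at hpos hr
    simpa using hmin q hpos hr
  have hV : V qα ≤ V q := by
    rcases (norm_nonneg (q - qα)).eq_or_lt with h | h
    · rw [sub_eq_zero.1 (norm_eq_zero.1 h.symm)]
    · exact (hmin q h (by linarith [norm_nonneg p])).le
  linarith [hpd p hp]

end DampedHamiltonian

theorem damped_hamiltonian_lyapunov_stability_general
    {F : Type*} [NormedAddCommGroup F] [InnerProductSpace ℝ F]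
    [FiniteDimensional ℝ F]
    (Minv : F →L[ℝ] F)
    (hsym : ∀ x y : F, ⟪Minv x, y⟫ = ⟪x, Minv y⟫)
    (hpd : ∀ x : F, x ≠ 0 → 0 < ⟪Minv x, x⟫)
    (V : F → ℝ) (gradV : F → F)
    (hV : ∀ x : F, HasFDerivAt V (innerSL ℝ (gradV x)) x)
    (γ : ℝ) (hγ : 0 ≤ γ)
    (qα : F) (r₀ : ℝ) (hr₀ : 0 < r₀)
    (hmin : ∀ x : F, 0 < ‖x - qα‖ → ‖x - qα‖ ≤ r₀ → V qα < V x) :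
    ∀ ε > 0, ∃ δ > 0, ∀ q p : ℝ → F,
      (∀ t : ℝ, 0 ≤ t → HasDerivAt q (Minv (p t)) t) →
      (∀ t : ℝ, 0 ≤ t → HasDerivAt p (-gradV (q t) - γ • Minv (p t)) t) →
      ‖q 0 - qα‖ + ‖p 0‖ < δ →
      ∀ t : ℝ, 0 ≤ t → ‖q t - qα‖ + ‖p t‖ < ε := by
  intro ε hε
  have hdist (z : WithLp 1 (F × F)) :
      dist z (WithLp.toLp 1 (qα, 0)) = ‖z.ofLp.1 - qα‖ + ‖z.ofLp.2‖ := by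
    simp [dist_eq_norm, WithLp.prod_norm_eq_of_L1]
  have hVc : Continuous V := continuous_iff_continuousAt.2 fun x => (hV x).continuousAt
  obtain ⟨δ, hδ, hstable⟩ := lyapunov_stability_of_strict_min
    (W := fun z : WithLp 1 (F × F) => hamiltonian Minv V z.ofLp) (x₀ := WithLp.toLp 1 (qα, 0))
    ((continuous_hamiltonian Minv hVc).comp (by fun_prop)) hr₀
    (fun z => by simpa only [hdist] using hamiltonian_lt_of_strictMin hpd hmin) hε
  refine ⟨δ, hδ, fun q p hq hp h0 t ht => ?_⟩
  have hz : ContinuousOn (fun s => WithLp.toLp 1 (q s, p s)) (Ici 0) :=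
    (by fun_prop : Continuous (WithLp.toLp 1 : F × F → _)).comp_continuousOn
      (ContinuousOn.prodMk (fun s hs => (hq s hs).continuousAt.continuousWithinAt)
        fun s hs => (hp s hs).continuousAt.continuousWithinAt)
  simpa only [hdist, WithLp.ofLp_toLp] using
    hstable _ hz (antitoneOn_hamiltonian_of_damped hsym hV hγ hq hp)
      (by simpa only [hdist, WithLp.ofLp_toLp] using h0) t ht

/-- Lyapunov stability of the equilibrium (q_α, 0) of the
finite-dimensional damped Hamiltonian system q′ = M⁻¹p,
p′ = −∇V(q) − γM⁻¹p, when q_α is a strict local minimizer of the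
(continuously differentiable) potential V, M⁻¹ is symmetric positive
definite and γ ≥ 0. -/
theorem damped_hamiltonian_lyapunov_stability
    {F : Type*} [NormedAddCommGroup F] [InnerProductSpace ℝ F]
    [FiniteDimensional ℝ F]
    (Minv : F →L[ℝ] F)
    (hsym : ∀ x y : F, ⟪Minv x, y⟫ = ⟪x, Minv y⟫)
    (hpd : ∀ x : F, x ≠ 0 → 0 < ⟪Minv x, x⟫)
    (V : F → ℝ) (gradV : F → F)
    (hV : ∀ x : F, HasFDerivAt V (innerSL ℝ (gradV x)) x)
    (hgV : Continuous gradV)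
    (γ : ℝ) (hγ : 0 ≤ γ)
    (qα : F) (r₀ : ℝ) (hr₀ : 0 < r₀)
    (hmin : ∀ x : F, 0 < ‖x - qα‖ → ‖x - qα‖ ≤ r₀ → V qα < V x) :
    ∀ ε > 0, ∃ δ > 0, ∀ q p : ℝ → F,
      (∀ t : ℝ, 0 ≤ t → HasDerivAt q (Minv (p t)) t) →
      (∀ t : ℝ, 0 ≤ t → HasDerivAt p (-gradV (q t) - γ • Minv (p t)) t) →
      ‖q 0 - qα‖ + ‖p 0‖ < δ →
      ∀ t : ℝ, 0 ≤ t → ‖q t - qα‖ + ‖p t‖ < ε :=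
  damped_hamiltonian_lyapunov_stability_general Minv hsym hpd V gradV hV γ hγ qα r₀ hr₀ hmin
end
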